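/- Define g(α₂, α₁, α₋₁, α₋₂) = (2 + α₁ + α₋₂)(α₁ − 2α₋₂) + (2 + α₂ + α₋₁)(2α₂ − α₋₁) on the simplex Δ = {α ∈ ℝ⁴ : α ≥ 0, α₂+α₁+α₋₁+α₋₂ = 1}. Order Δ by majorization: α ≥ β iff α₂ ≥ β₂, α₂+α₁ ≥ β₂+β₁, and α₂+α₁+α₋₁ ≥ β₂+β₁+β₋₁. Then g is strictly monotone: if α > β in this order then g(α) > g(β). -/
import Mathlib


def g (α₂ α₁ αm₁ αm₂ : ℝ) : ℝ :=
  (2 + α₁ + αm₂) * (α₁ - 2 * αm₂) + (2 + α₂ + αm₁) * (2 * α₂ - αm₁)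

theorem stmt13 (α₂ α₁ αm₁ αm₂ β₂ β₁ βm₁ βm₂ : ℝ)
    (hα : 0 ≤ α₂ ∧ 0 ≤ α₁ ∧ 0 ≤ αm₁ ∧ 0 ≤ αm₂)
    (hβ : 0 ≤ β₂ ∧ 0 ≤ β₁ ∧ 0 ≤ βm₁ ∧ 0 ≤ βm₂)
    (hαsum : α₂ + α₁ + αm₁ + αm₂ = 1)
    (hβsum : β₂ + β₁ + βm₁ + βm₂ = 1)
    (h1 : β₂ ≤ α₂)
    (h2 : β₂ + β₁ ≤ α₂ + α₁)
    (h3 : β₂ + β₁ + βm₁ ≤ α₂ + α₁ + αm₁)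
    (hne : ¬(α₂ = β₂ ∧ α₁ = β₁ ∧ αm₁ = βm₁ ∧ αm₂ = βm₂)) :
    g β₂ β₁ βm₁ βm₂ < g α₂ α₁ αm₁ αm₂ := by
  obtain ⟨ha2, ha1, ham1, ham2⟩ := hα
  obtain ⟨hb2, hb1, hbm1, hbm2⟩ := hβ
  -- one of the partial-sum inequalities is strict
  have hcase : β₂ < α₂ ∨ β₂ + β₁ < α₂ + α₁ ∨ β₂ + β₁ + βm₁ < α₂ + α₁ + αm₁ := by
    by_contra hc
    push_neg at hc
    obtain ⟨c1, c2, c3⟩ := hc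
    exact hne ⟨le_antisymm c1 h1, by linarith, by linarith, by linarith⟩
  unfold g
  rcases hcase with hs | hs | hs
  · nlinarith [mul_nonneg (sub_nonneg.2 h2) (sub_nonneg.2 h2),
      mul_nonneg (sub_nonneg.2 h3) (sub_nonneg.2 h3),
      mul_pos (sub_pos.2 hs) (sub_pos.2 hs),
      mul_nonneg (sub_nonneg.2 h1) (sub_nonneg.2 h3),
      mul_nonneg (sub_nonneg.2 h2) (sub_nonneg.2 h3),
      mul_nonneg (sub_nonneg.2 h1) hbm2, mul_nonneg (sub_nonneg.2 h2) hbm2,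
      mul_nonneg (sub_nonneg.2 h3) hbm2, mul_pos (sub_pos.2 hs) (by linarith : (0:ℝ) < 1 - β₂ - β₁ + αm₂ + α₂ - β₂),
      mul_nonneg (sub_nonneg.2 h3) ham2, mul_nonneg (sub_nonneg.2 h2) ham2]
  · nlinarith [mul_nonneg (sub_nonneg.2 h1) (sub_nonneg.2 h1),
      mul_nonneg (sub_nonneg.2 h3) (sub_nonneg.2 h3),
      mul_nonneg (sub_nonneg.2 h1) (sub_nonneg.2 h3),
      mul_pos (sub_pos.2 hs) (by linarith : (0:ℝ) < 1 + (αm₂ + βm₂ + β₂) - β₂),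
      mul_nonneg (sub_nonneg.2 h1) hbm2, mul_nonneg (sub_nonneg.2 h3) hbm2,
      mul_nonneg (sub_nonneg.2 h1) ham2, mul_nonneg (sub_nonneg.2 h3) ham2]
  · nlinarith [mul_nonneg (sub_nonneg.2 h1) (sub_nonneg.2 h1),
      mul_nonneg (sub_nonneg.2 h2) (sub_nonneg.2 h2),
      mul_nonneg (sub_nonneg.2 h1) (sub_nonneg.2 h2),
      mul_pos (sub_pos.2 hs) (by linarith : (0:ℝ) < β₂ + β₁ + αm₂ + βm₂),
      mul_nonneg (sub_nonneg.2 h1) hbm2, mul_nonneg (sub_nonneg.2 h2) hbm2,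
      mul_nonneg (sub_nonneg.2 h1) ham2, mul_nonneg (sub_nonneg.2 h2) ham2]
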